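/- Let f be a probability density on ℝ^d with ∫ f² < ∞, and let X_1, X_2 be independent random vectors with density f. Then P{‖X_1 − X_2‖ ≤ r} / (V_d r^d) → ∫ f² as r ↓ 0; equivalently, ∫ f(x) μ_r(x) dx = V_d r^d (∫ f² + o(1)) as r ↓ 0, where μ_r(x) := ∫_{B(x,r)} f(y) dy. -/

import Mathlib

open MeasureTheory Metric Filter
open scoped ENNReal

noncomputable section

abbrev Euc (d : ℕ) := EuclideanSpace ℝ (Fin d)

/-- `V_d`: the Lebesgue volume of the unit ball in ℝ^d. -/
def unitBallVol (d : ℕ) : ℝ := (volume (closedBall (0 : Euc d) 1)).toReal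

/-- The measure on ℝ^d with density `f` w.r.t. Lebesgue measure. -/
def densityMeasure {d : ℕ} (f : Euc d → ℝ) : Measure (Euc d) :=
  volume.withDensity fun x => ENNReal.ofReal (f x)

/-- For a probability density `f` on ℝ^d with `∫ f² < ∞` and independent `X₁, X₂` with
density `f`, `P{‖X₁ − X₂‖ ≤ r} / (V_d r^d) → ∫ f²` as `r ↓ 0`. -/
theorem pair_prob_div_ball_vol_tendsto (d : ℕ) (hd : 1 ≤ d) (f : Euc d → ℝ)
    (hmeas : Measurable f) (hpos : ∀ x, 0 ≤ f x)
    (hint : ∫⁻ x, ENNReal.ofReal (f x) = 1)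
    (hf2 : ∫⁻ x, ENNReal.ofReal (f x ^ 2) < ⊤) :
    Tendsto (fun r : ℝ =>
        (((densityMeasure f).prod (densityMeasure f))
            {p : Euc d × Euc d | dist p.1 p.2 ≤ r}).toReal / (unitBallVol d * r ^ d))
      (nhdsWithin 0 (Set.Ioi 0)) (nhds (∫ x, f x ^ 2)) := by
  haveI : Nonempty (Fin d) := ⟨⟨0, hd⟩⟩
  haveI : Nontrivial (Euc d) := inferInstanceAs (Nontrivial (PiLp 2 fun _ : Fin d => ℝ))
  set g : Euc d → ℝ≥0∞ := fun x => ENNReal.ofReal (f x) with hg_def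
  have hg : Measurable g := hmeas.ennreal_ofReal
  -- f is in L²
  have hfL2 : MemLp f 2 (volume : Measure (Euc d)) := by
    rw [memLp_two_iff_integrable_sq hmeas.aestronglyMeasurable]
    refine ⟨(hmeas.pow_const 2).aestronglyMeasurable, ?_⟩
    rw [hasFiniteIntegral_iff_ofReal (ae_of_all _ fun x => sq_nonneg (f x))]
    exact hf2
  set F : Lp ℝ 2 (volume : Measure (Euc d)) := hfL2.toLp f with hF_def
  have hF_ae : (F : Euc d → ℝ) =ᵐ[volume] f := MemLp.coeFn_toLp hfL2
  -- translations
  set cm : Euc d → C(Euc d, Euc d) := fun t => ⟨fun x => x + t, by continuity⟩ with hcm_def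
  have hcm : Continuous cm := by
    apply ContinuousMap.continuous_of_continuous_uncurry
    exact (continuous_snd.add continuous_fst)
  have mp : ∀ t : Euc d, MeasurePreserving (cm t) volume volume := fun t =>
    measurePreserving_add_right volume t
  set shift : Euc d → Lp ℝ 2 (volume : Measure (Euc d)) :=
    fun t => Lp.compMeasurePreserving (cm t) (mp t) F with hshift_def
  have hshift_cont : Continuous shift :=
    Continuous.compMeasurePreservingLp continuous_const hcm mp (by norm_num)
  have hshift_ae : ∀ t, (shift t : Euc d → ℝ) =ᵐ[volume] fun x => f (x + t) := by
    intro t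
    refine (Lp.coeFn_compMeasurePreserving F (mp t)).trans ?_
    have := (mp t).quasiMeasurePreserving.ae_eq_comp hF_ae
    exact this
  set Φ : Euc d → ℝ := fun t => (inner ℝ F (shift t) : ℝ) with hΦ_def
  have hΦ_cont : Continuous Φ := continuous_const.inner hshift_cont
  have hΦ_eq : ∀ t, Φ t = ∫ x, f x * f (x + t) := by
    intro t
    show (inner ℝ F (shift t) : ℝ) = _
    rw [L2.inner_def]
    refine integral_congr_ae ?_
    filter_upwards [hF_ae, hshift_ae t] with x h1 h2
    simp [h1, h2, RCLike.inner_apply, starRingEnd_apply, mul_comm]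
  have hΦ_int : ∀ t, Integrable (fun x => f x * f (x + t)) volume := by
    intro t
    refine (L2.integrable_inner (𝕜 := ℝ) F (shift t)).congr ?_
    filter_upwards [hF_ae, hshift_ae t] with x h1 h2
    simp [h1, h2, RCLike.inner_apply, starRingEnd_apply, mul_comm]
  have hΦ_nn : ∀ t, 0 ≤ Φ t := by
    intro t
    rw [hΦ_eq t]
    exact integral_nonneg fun x => mul_nonneg (hpos x) (hpos _)
  have hΦ0 : Φ 0 = ∫ x, f x ^ 2 := by
    rw [hΦ_eq]; congr 1; ext x; simp [sq]
  -- the density measure is a probability measure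
  set μ : Measure (Euc d) := densityMeasure f with hμ_def
  haveI : IsProbabilityMeasure μ := by
    constructor
    rw [hμ_def, densityMeasure, withDensity_apply _ MeasurableSet.univ,
      Measure.restrict_univ]
    exact hint
  -- key identity
  have hA : ∀ r : ℝ, (μ.prod μ) {p : Euc d × Euc d | dist p.1 p.2 ≤ r}
      = ∫⁻ t in closedBall (0 : Euc d) r, ENNReal.ofReal (Φ t) := by
    intro r
    have hS : MeasurableSet {p : Euc d × Euc d | dist p.1 p.2 ≤ r} :=
      (isClosed_le (by fun_prop) continuous_const).measurableSet
    rw [Measure.prod_apply hS]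
    have h1 : ∀ x : Euc d, Prod.mk x ⁻¹' {p : Euc d × Euc d | dist p.1 p.2 ≤ r}
        = closedBall x r := by
      intro x; ext y; simp [dist_comm]
    have h2 : ∀ x : Euc d, μ (closedBall x r)
        = ∫⁻ t in closedBall (0 : Euc d) r, g (x + t) := by
      intro x
      rw [hμ_def, densityMeasure, withDensity_apply _ measurableSet_closedBall]
      have emb : MeasurableEmbedding (fun t : Euc d => x + t) :=
        (MeasurableEquiv.addLeft x).measurableEmbedding
      have := (measurePreserving_add_left volume x).setLIntegral_comp_preimage_emb emb g
        (closedBall x r)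
      have hpre : (fun t : Euc d => x + t) ⁻¹' closedBall x r = closedBall (0 : Euc d) r := by
        ext t
        simp [dist_eq_norm]
      rw [← this, hpre]
    simp only [h1, h2]
    -- move to Lebesgue measure
    have hH : Measurable fun x : Euc d => ∫⁻ t in closedBall (0 : Euc d) r, g (x + t) := by
      apply Measurable.lintegral_prod_right (f := fun x t => g (x + t))
      exact hg.comp (measurable_fst.add measurable_snd)
    rw [hμ_def, densityMeasure, lintegral_withDensity_eq_lintegral_mul _ hg hH]
    have h3 : ∀ x : Euc d, ((fun x => g x) * fun x => ∫⁻ t in closedBall (0 : Euc d) r, g (x + t)) x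
        = ∫⁻ t in closedBall (0 : Euc d) r, g x * g (x + t) := by
      intro x
      simp only [Pi.mul_apply]
      exact (lintegral_const_mul _ (hg.comp (measurable_const.add measurable_id))).symm
    simp only [h3]
    rw [lintegral_lintegral_swap]
    · refine setLIntegral_congr_fun measurableSet_closedBall (fun t _ => ?_)
      have : ENNReal.ofReal (Φ t) = ∫⁻ x, ENNReal.ofReal (f x * f (x + t)) := by
        rw [hΦ_eq t]
        exact ofReal_integral_eq_lintegral_ofReal (hΦ_int t)
          (ae_of_all _ fun x => mul_nonneg (hpos x) (hpos _))
      rw [this]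
      refine lintegral_congr fun x => ?_
      rw [hg_def, ENNReal.ofReal_mul (hpos x)]
    · exact ((hg.comp measurable_fst).mul
        (hg.comp (measurable_fst.add measurable_snd))).aemeasurable
  -- real version
  have hB : ∀ r : ℝ, ((μ.prod μ) {p : Euc d × Euc d | dist p.1 p.2 ≤ r}).toReal
      = ∫ t in closedBall (0 : Euc d) r, Φ t := by
    intro r
    rw [hA r]
    have hΦon : IntegrableOn Φ (closedBall (0 : Euc d) r) volume :=
      hΦ_cont.continuousOn.integrableOn_compact (isCompact_closedBall _ _)
    rw [← ofReal_integral_eq_lintegral_ofReal hΦon (ae_of_all _ fun t => hΦ_nn t)]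
    exact ENNReal.toReal_ofReal (integral_nonneg fun t => hΦ_nn t)
  -- volume of balls
  have hvol : ∀ r : ℝ, 0 < r → (volume (closedBall (0 : Euc d) r)).toReal
      = unitBallVol d * r ^ d := by
    intro r hr
    rw [Measure.addHaar_closedBall _ _ hr.le, finrank_euclideanSpace_fin,
      ← Measure.addHaar_closedBall_eq_addHaar_ball]
    rw [ENNReal.toReal_mul, ENNReal.toReal_ofReal (by positivity)]
    rw [unitBallVol, mul_comm]
  have hvolpos : ∀ r : ℝ, 0 < r → 0 < (volume (closedBall (0 : Euc d) r)).toReal := by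
    intro r hr
    refine ENNReal.toReal_pos (measure_closedBall_pos volume _ hr).ne' ?_
    exact (measure_closedBall_lt_top).ne
  -- final ε-δ argument
  rw [← hΦ0]
  rw [Metric.tendsto_nhdsWithin_nhds]
  intro ε hε
  obtain ⟨δ, hδ, hδ'⟩ := Metric.continuousAt_iff.mp
    (hΦ_cont.continuousAt (x := (0 : Euc d))) (ε / 2) (half_pos hε)
  refine ⟨δ, hδ, fun {r} hr hrδ => ?_⟩
  have hr0 : 0 < r := hr
  rw [Real.dist_eq] at hrδ ⊢
  rw [sub_zero, abs_of_pos hr0] at hrδ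
  have hv : (volume (closedBall (0 : Euc d) r)).toReal = unitBallVol d * r ^ d := hvol r hr0
  set v : ℝ := (volume (closedBall (0 : Euc d) r)).toReal with hv_def
  have hvpos : 0 < v := hvolpos r hr0
  have hΦon : IntegrableOn Φ (closedBall (0 : Euc d) r) volume :=
    hΦ_cont.continuousOn.integrableOn_compact (isCompact_closedBall _ _)
  have key : |(∫ t in closedBall (0 : Euc d) r, Φ t) - Φ 0 * v| ≤ (ε / 2) * v := by
    have h4 : (∫ t in closedBall (0 : Euc d) r, Φ t) - Φ 0 * v
        = ∫ t in closedBall (0 : Euc d) r, (Φ t - Φ 0) := by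
      rw [integral_sub hΦon (integrableOn_const measure_closedBall_lt_top.ne)]
      rw [setIntegral_const, smul_eq_mul, mul_comm, Measure.real_def]
    rw [h4]
    have := norm_setIntegral_le_of_norm_le_const (μ := volume) (s := closedBall (0 : Euc d) r)
      (f := fun t => Φ t - Φ 0) (C := ε / 2) measure_closedBall_lt_top ?_
    · simpa [Real.norm_eq_abs, Measure.real_def, hv_def] using this
    · intro t ht
      rw [Real.norm_eq_abs, ← Real.dist_eq]
      have : dist t (0 : Euc d) < δ := lt_of_le_of_lt (mem_closedBall.mp ht) hrδ
      exact (hδ' this).le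
  rw [hB r, ← hv]
  have h5 : (∫ t in closedBall (0 : Euc d) r, Φ t) / v - Φ 0
      = ((∫ t in closedBall (0 : Euc d) r, Φ t) - Φ 0 * v) / v := by
    field_simp
  rw [h5, abs_div, abs_of_pos hvpos]
  calc |(∫ t in closedBall (0 : Euc d) r, Φ t) - Φ 0 * v| / v ≤ (ε / 2) * v / v := by
        gcongr
      _ = ε / 2 := by field_simp
      _ < ε := half_lt_self hε
end
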